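/- arXiv:1508.04808 — 3 statements merged into one kernel-verified Lean document; each statement's English description precedes it below -/
import Mathlib

section
/- With D = ▷ ∘ ∇_S constructed from a left bimodule connection and a left module map ▷: Ω¹ ⊗_A S → S, the first-order condition [[D, a], J b J⁻¹] = 0 for all a, b ∈ A holds if and only if ▷ is a bimodule map (where the right action on S is ψ·a = J a* J⁻¹ψ). -/
/-- With D = ▷ ∘ ∇_S from a left bimodule connection and a left module map
▷ : Ω¹ ⊗_A S → S, the first-order condition [[D,a], J b J⁻¹] = 0 (i.e. [D,a] commutes with
the right action rS) holds iff ▷ is a bimodule map.  `T` models Ω¹ ⊗_A S, with right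
action `rT` induced by the right action `rS` on S; `hspan` records that T is spanned by
elements a·(db ⊗ φ), as holds for a first order differential calculus. -/
theorem stmt2
    (A : Type*) [Ring A] [StarRing A] [Algebra ℂ A]
    (Ω S T : Type*) [AddCommGroup Ω] [Module ℂ Ω]
    [AddCommGroup S] [Module ℂ S] [AddCommGroup T] [Module ℂ T]
    (d : A → Ω)
    (lS rS : A → S →ₗ[ℂ] S) (lT rT : A → T →ₗ[ℂ] T)
    (tens : Ω → S → T)
    (nab : S →ₗ[ℂ] T) (tr : T →ₗ[ℂ] S)
    (hLeib : ∀ a φ, nab (lS a φ) = tens (d a) φ + lT a (nab φ))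
    (htrl : ∀ a t, tr (lT a t) = lS a (tr t))
    (hlr : ∀ a b φ, lS a (rS b φ) = rS b (lS a φ))
    (hlrT : ∀ a b t, lT a (rT b t) = rT b (lT a t))
    (htens : ∀ b ξ φ, rT b (tens ξ φ) = tens ξ (rS b φ))
    (hspan : ∀ t : T, t ∈ Submodule.span ℂ {x : T | ∃ a b φ, x = lT a (tens (d b) φ)}) :
    (∀ a b φ, tr (nab (lS a (rS b φ))) - lS a (tr (nab (rS b φ)))
        = rS b (tr (nab (lS a φ)) - lS a (tr (nab φ))))
      ↔ (∀ b t, tr (rT b t) = rS b (tr t)) := by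
  have key : ∀ a φ, tr (nab (lS a φ)) - lS a (tr (nab φ)) = tr (tens (d a) φ) := by
    intro a φ
    rw [hLeib, map_add, htrl]
    abel
  constructor
  · intro h b t
    have h' : ∀ a b φ, tr (tens (d a) (rS b φ)) = rS b (tr (tens (d a) φ)) := by
      intro a b φ
      rw [← key, ← key, h, map_sub]
    refine Submodule.span_induction ?_ ?_ ?_ ?_ (hspan t)
    · rintro x ⟨a, c, φ, rfl⟩
      rw [← hlrT, htrl, htens, h', hlr, ← htrl]
    · simp
    · intro x y _ _ hx hy
      simp [hx, hy]
    · intro c x _ hx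
      simp [hx]
  · intro h a b φ
    rw [key, key, ← htens, h]
end

section
/- Define on S = M₂(ℂ)² the maps J(x⊕u) = (−u*) ⊕ x* and D(x⊕u) = (E₁₂ u − u E₁₂) ⊕ (E₂₁ x − x E₂₁). Then J is antilinear with J² = −id, J D = D J, the left action a·(x⊕u) = (ax)⊕(au) satisfies [a, J b* J⁻¹] = 0 for all a,b ∈ M₂(ℂ), and with γ(x⊕u) = (−x)⊕u we have γ² = id, Jγ = −γJ, Dγ = −γD. -/
abbrev M2 : Type := Matrix (Fin 2) (Fin 2) ℂ

noncomputable def E12 : M2 := Matrix.single 0 1 1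
noncomputable def E21 : M2 := Matrix.single 1 0 1

/-- The real structure J(x⊕u) = (−u*) ⊕ x*. -/
noncomputable def JM (p : M2 × M2) : M2 × M2 := (-(star p.2), star p.1)

/-- The Dirac operator D(x⊕u) = (E₁₂u − uE₁₂) ⊕ (E₂₁x − xE₂₁). -/
noncomputable def DM (p : M2 × M2) : M2 × M2 :=
  (E12 * p.2 - p.2 * E12, E21 * p.1 - p.1 * E21)

/-- The grading γ(x⊕u) = (−x) ⊕ u. -/
noncomputable def γM (p : M2 × M2) : M2 × M2 := (-p.1, p.2)

/-!
`J` swaps the summands and takes adjoints, so `J² = −1` because `star` is an involutive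
antilinear map. Taking adjoints reverses a commutator, `(e x − x e)* = −(e* x* − x* e*)`, and
`E₂₁* = E₁₂`, so `J` carries each component of `D` to the other: `JD = DJ`. Both `J` and `D`
swap the summands while `γ` is `−1` on the first and `+1` on the second, so both anticommute
with `γ`.
-/

theorem star_mul_sub_mul {A : Type*} [Ring A] [StarRing A] (e x : A) :
    star (e * x - x * e) = -(star e * star x - star x * star e) := by
  rw [star_sub, star_mul, star_mul, neg_sub]

theorem star_E12 : star E12 = E21 := by
  simp [E12, E21, Matrix.star_eq_conjTranspose]

theorem star_E21 : star E21 = E12 := by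
  rw [← star_E12, star_star]

theorem JM_smul_add (c : ℂ) (p q : M2 × M2) :
    JM (c • p + q) = (starRingEnd ℂ c) • JM p + JM q := by
  ext : 1 <;> simp [JM, star_add, star_smul, add_comm]

theorem JM_JM (p : M2 × M2) : JM (JM p) = -p := by
  simp [JM, Prod.ext_iff]

theorem JM_DM (p : M2 × M2) : JM (DM p) = DM (JM p) := by
  ext : 1
  · simp only [JM, DM, star_mul_sub_mul, star_E21, neg_neg]
  · simp only [JM, DM, star_mul_sub_mul, star_E12, mul_neg, neg_mul, sub_neg_eq_add, neg_sub,
      neg_add_eq_sub]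

theorem γM_γM (p : M2 × M2) : γM (γM p) = p := by
  simp [γM]

theorem offDiag_γM_anticomm (f g : M2 → M2) (hg : ∀ x, g (-x) = -g x) (p : M2 × M2) :
    (f (γM p).2, g (γM p).1) = -γM (f p.2, g p.1) := by
  simp [γM, hg]

theorem JM_γM (p : M2 × M2) : JM (γM p) = -γM (JM p) :=
  offDiag_γM_anticomm (fun u => -star u) star star_neg p

theorem DM_γM (p : M2 × M2) : DM (γM p) = -γM (DM p) :=
  offDiag_γM_anticomm (fun u => E12 * u - u * E12) (fun x => E21 * x - x * E21)
    (fun x => by rw [mul_neg, neg_mul, sub_neg_eq_add, neg_sub, neg_add_eq_sub]) p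

/-- J is antilinear with J² = −id, JD = DJ, the left action commutes with
J b* J⁻¹ (which acts by right multiplication by b*), and with γ(x⊕u) = (−x)⊕u we have
γ² = id, Jγ = −γJ and Dγ = −γD. -/
theorem stmt9 :
    (∀ (c : ℂ) (p q : M2 × M2), JM (c • p + q) = (starRingEnd ℂ c) • JM p + JM q) ∧
    (∀ p : M2 × M2, JM (JM p) = -p) ∧
    (∀ p : M2 × M2, JM (DM p) = DM (JM p)) ∧
    (∀ (a b : M2) (p : M2 × M2),
        (a * (p.1 * star b), a * (p.2 * star b))
          = ((a * p.1) * star b, (a * p.2) * star b)) ∧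
    (∀ p : M2 × M2, γM (γM p) = p) ∧
    (∀ p : M2 × M2, JM (γM p) = -γM (JM p)) ∧
    (∀ p : M2 × M2, DM (γM p) = -γM (DM p)) :=
  ⟨JM_smul_add, JM_JM, JM_DM, fun _ _ _ => by simp only [mul_assoc], γM_γM, JM_γM, DM_γM⟩
end

section
/- Chern connection for fgp modules (uniqueness): Let E be a finitely generated projective left A-module with holomorphic structure ∂̄_E and nondegenerate hermitian inner product ⟨,⟩: E ⊗ conj(E) → A. Then there is a unique left connection ∇_E: E → Ω¹ ⊗_A E preserving the hermitian metric and with (π^{0,1} ⊗ id)∇_E = ∂̄_E; in Christoffel symbol form, if Γ = Γ₊ + Γ₋ with Γ₋ determined by ∂̄_E, then −Γ₊ = ∂g• · g• + g• (Γ₋)* g• (i.e. −Γ₊ = ∂g^∙ g_∙ + g^∙ Γ₋* g_∙). -/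
/-!
Metric preservation in its (1,0)-part reads `∂g^∙ = -Γ₊ g^∙ - g^∙ Γ₋*`. Multiplying on the right by
`g_∙` and using `g^∙ g_∙ = P` together with `Γ₊ P = Γ₊` isolates `Γ₊`.
-/

theorem sum_apply_of_map_add {κ R M F : Type*} [AddCommMonoid R] [AddCommGroup M] [FunLike F M M]
    (r : R → F) (hadd : ∀ a b m, r (a + b) m = r a m + r b m) (s : Finset κ) (f : κ → R) (m : M) :
    r (∑ k ∈ s, f k) m = ∑ k ∈ s, r (f k) m := by
  let ρ : R →+ (M → M) := AddMonoidHom.mk' (fun a => r a) fun a b => funext (hadd a b)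
  change ρ (∑ k ∈ s, f k) m = _
  rw [map_sum, Finset.sum_apply]
  rfl

section RightMatrixAction

variable {ι R M F : Type*} [Fintype ι] [NonUnitalNonAssocSemiring R] [AddCommGroup M]
  [FunLike F M M] [AddMonoidHomClass F M M]

/-- With `r a` the right multiplication by `a`, this is the product `Γ X` of a matrix with entries
in `M` by a matrix over `R`. -/
def rightMatrixAct (r : R → F) (Γ : Matrix ι ι M) (X : Matrix ι ι R) : Matrix ι ι M :=
  fun i j => ∑ a, r (X a j) (Γ i a)

theorem rightMatrixAct_rightMatrixAct (r : R → F) (hadd : ∀ a b m, r (a + b) m = r a m + r b m)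
    (hmul : ∀ a b m, r (a * b) m = r b (r a m)) (Γ : Matrix ι ι M) (X Y : Matrix ι ι R) :
    rightMatrixAct r (rightMatrixAct r Γ X) Y = rightMatrixAct r Γ (X * Y) := by
  ext i j
  simp only [rightMatrixAct, Matrix.mul_apply, map_sum, sum_apply_of_map_add r hadd, ← hmul]
  exact Finset.sum_comm

end RightMatrixAction

open Finset in
theorem stmt17_general (n : ℕ)
    (A : Type*) [Ring A]
    (Ω10 Ω01 : Type*) [AddCommGroup Ω10] [Module ℂ Ω10]
    (l10 r10 : A → Ω10 →ₗ[ℂ] Ω10)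
    (hrmul : ∀ a b ω, r10 (a * b) ω = r10 b (r10 a ω))
    (hradd : ∀ a b ω, r10 (a + b) ω = r10 a ω + r10 b ω)
    (starΩ : Ω01 → Ω10)
    (pd : A → Ω10)  -- the holomorphic differential ∂ : A → Ω^{1,0}
    (P gU gL : Matrix (Fin n) (Fin n) A)
    (hgUgL : gU * gL = P)
    (Γp : Matrix (Fin n) (Fin n) Ω10) (Γm : Matrix (Fin n) (Fin n) Ω01)
    (hΓpP : ∀ i j, ∑ a, r10 (P a j) (Γp i a) = Γp i j)
    -- the (1,0)-component of metric preservation: ∂g^{ij} = −Γ₊^i_a g^{aj} − g^{ia}(Γ₋^j_a)*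
    (hpres : ∀ i j, pd (gU i j)
        = -(∑ a, r10 (gU a j) (Γp i a)) - ∑ a, l10 (gU i a) (starΩ (Γm j a))) :
    ∀ i j, Γp i j
        = -(∑ a, r10 (gL a j) (pd (gU i a)))
          - ∑ a, ∑ b, r10 (gL b j) (l10 (gU i a) (starΩ (Γm b a))) := by
  intro i j
  have hΓP : rightMatrixAct r10 Γp P = Γp := funext₂ hΓpP
  have hexpand : ∑ a, r10 (gL a j) (pd (gU i a))
      = -rightMatrixAct r10 (rightMatrixAct r10 Γp gU) gL i j
        - ∑ a, ∑ b, r10 (gL b j) (l10 (gU i a) (starΩ (Γm b a))) := by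
    simp only [rightMatrixAct, hpres, map_sub, map_neg, map_sum, sum_sub_distrib, sum_neg_distrib]
    exact congrArg _ Finset.sum_comm
  rw [hexpand, rightMatrixAct_rightMatrixAct r10 hradd hrmul, hgUgL, hΓP]
  abel

open Finset in
/-- Chern connection for fgp modules, in Christoffel symbol form.
A is a *-algebra with Ω¹ = Ω^{1,0} ⊕ Ω^{0,1}, and E a fgp left module with dual basis
giving projection matrix P, metric matrices g^∙ = gU, g_∙ = gL (gU gL = P, gL P = gL,
P gU = gU, (g^∙)* = g^∙), and Christoffel symbols Γ = Γ₊ + Γ₋ with Γ₋ determined by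
the holomorphic structure ∂̄_E.  If the connection preserves the hermitian metric
(its (1,0)-component `hpres`) and Γ₊ P = Γ₊, then Γ₊ is uniquely determined:
−Γ₊ = ∂g^∙ · g_∙ + g^∙ · (Γ₋)* · g_∙. -/
theorem stmt17 (n : ℕ)
    (A : Type*) [Ring A] [StarRing A] [Algebra ℂ A]
    (Ω10 Ω01 : Type*) [AddCommGroup Ω10] [Module ℂ Ω10] [AddCommGroup Ω01] [Module ℂ Ω01]
    (l10 r10 : A → Ω10 →ₗ[ℂ] Ω10) (l01 r01 : A → Ω01 →ₗ[ℂ] Ω01)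
    (hl1 : ∀ ω, l10 1 ω = ω) (hr1 : ∀ ω, r10 1 ω = ω)
    (hlmul : ∀ a b ω, l10 (a * b) ω = l10 a (l10 b ω))
    (hrmul : ∀ a b ω, r10 (a * b) ω = r10 b (r10 a ω))
    (hladd : ∀ a b ω, l10 (a + b) ω = l10 a ω + l10 b ω)
    (hradd : ∀ a b ω, r10 (a + b) ω = r10 a ω + r10 b ω)
    (hcomm : ∀ a b ω, l10 a (r10 b ω) = r10 b (l10 a ω))
    (starΩ : Ω01 → Ω10)
    (hstar_add : ∀ ξ η, starΩ (ξ + η) = starΩ ξ + starΩ η)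
    (hstar_l : ∀ a ξ, starΩ (l01 a ξ) = r10 (star a) (starΩ ξ))
    (hstar_r : ∀ a ξ, starΩ (r01 a ξ) = l10 (star a) (starΩ ξ))
    (pd : A → Ω10)  -- the holomorphic differential ∂ : A → Ω^{1,0}
    (hpd_add : ∀ a b, pd (a + b) = pd a + pd b)
    (hpdLeib : ∀ a b, pd (a * b) = l10 a (pd b) + r10 b (pd a))
    (P gU gL : Matrix (Fin n) (Fin n) A)
    (hP : P * P = P) (hgUgL : gU * gL = P) (hgLP : gL * P = gL) (hPgU : P * gU = gU)
    (hgstar : ∀ i j, star (gU i j) = gU j i)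
    (Γp : Matrix (Fin n) (Fin n) Ω10) (Γm : Matrix (Fin n) (Fin n) Ω01)
    (hΓpP : ∀ i j, ∑ a, r10 (P a j) (Γp i a) = Γp i j)
    -- the (1,0)-component of metric preservation: ∂g^{ij} = −Γ₊^i_a g^{aj} − g^{ia}(Γ₋^j_a)*
    (hpres : ∀ i j, pd (gU i j)
        = -(∑ a, r10 (gU a j) (Γp i a)) - ∑ a, l10 (gU i a) (starΩ (Γm j a))) :
    ∀ i j, Γp i j
        = -(∑ a, r10 (gL a j) (pd (gU i a)))
          - ∑ a, ∑ b, r10 (gL b j) (l10 (gU i a) (starΩ (Γm b a))) :=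
  stmt17_general n A Ω10 Ω01 l10 r10 hrmul hradd starΩ pd P gU gL hgUgL Γp Γm hΓpP hpres
end
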